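/- Let γ > 0, Δ > 0, and let B : {(r,t) : r > 0, t ∈ ℝ} → ℝ be continuously differentiable and satisfy ∂_t B + ∂_r [ (r³/(2γ√Δ)) sin²(B/r²) ] = 0 at every point with r > 0. For n ∈ ℕ let Σ_n denote S_n if n is odd and S̃_n if n is even, where S_n(x) = Σ_{k=0}^{n} ((−1)^k/(2ⁿ(n−2k))) C(n,k) sin((n−2k)x − nπ/2) and S̃_n(x) = Σ_{k≠n/2} ((−1)^k/(2ⁿ(n−2k))) C(n,k) sin((n−2k)x − nπ/2) + (1/2ⁿ) C(n,n/2) x. Then for every n ∈ ℕ, B also satisfies the conservation law ∂_t [ r^{2+3n/2} Σ_n(B/r²) ] + ∂_r [ r^{3(n+2)/2} sin^{n+2}(B/r²) / ((n+2)γ√Δ) ] = 0 at every point with r > 0. -/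

import Mathlib

open Real Finset

/-- The conserved-density profile for odd `n`. -/
noncomputable def Sodd (n : ℕ) (x : ℝ) : ℝ :=
  ∑ k ∈ Finset.range (n + 1),
    ((-1 : ℝ) ^ k / (2 ^ n * ((n : ℝ) - 2 * k))) * (n.choose k : ℝ) *
      Real.sin (((n : ℝ) - 2 * k) * x - (n : ℝ) * π / 2)

/-- The conserved-density profile for even `n`. -/
noncomputable def Seven (n : ℕ) (x : ℝ) : ℝ :=
  (∑ k ∈ (Finset.range (n + 1)).erase (n / 2),
    ((-1 : ℝ) ^ k / (2 ^ n * ((n : ℝ) - 2 * k))) * (n.choose k : ℝ) *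
      Real.sin (((n : ℝ) - 2 * k) * x - (n : ℝ) * π / 2)) +
  (1 / 2 ^ n : ℝ) * (n.choose (n / 2) : ℝ) * x

/-- `Σ_n = S_n` for odd `n` and `S̃_n` for even `n`. -/
noncomputable def SigmaN (n : ℕ) (x : ℝ) : ℝ :=
  if Odd n then Sodd n x else Seven n x

/-!
Power reduction writes `sin x ^ n` as `∑ₖ (-1)ᵏ 2⁻ⁿ C(n,k) cos ((n - 2k) x - nπ/2)`, and `Σ_n` is
its termwise antiderivative (for even `n` the term `k = n/2` is constant and integrates to the
linear term of `S̃_n`), so `Σ_n' = sin ^ n`. With `u = B / r²` and `κ = 1 / (γ√Δ)` the PDE reads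
`∂_t u = -κ sin u (3/2 sin u + r cos u ∂_r u)`, and by the chain rule `∂_t v_n` and `∂_r f_n` are
`∓ κ r^{2+3n/2} sin^{n+1} u (3/2 sin u + r cos u ∂_r u)`.
-/

theorem ofReal_sin_pow_eq_sum_exp (n : ℕ) (x : ℝ) :
    ((sin x ^ n : ℝ) : ℂ) = ∑ k ∈ range (n + 1),
      (((-1) ^ k / 2 ^ n * n.choose k : ℝ) : ℂ) *
        Complex.exp (((n - 2 * k) * x - n * π / 2 : ℝ) * Complex.I) := by
  have hsin : (sin x : ℂ) = (-(Complex.exp (x * Complex.I))⁻¹ + Complex.exp (x * Complex.I)) *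
      (-Complex.I / 2) := by
    rw [Complex.ofReal_sin, Complex.sin, neg_mul, ← Complex.exp_neg]; ring
  -- the phase `-nπ/2` contributes the factor `(-i)ⁿ`, i.e. `(2i)⁻ⁿ = (-i)ⁿ / 2ⁿ`
  have hterm : ∀ k ∈ range (n + 1),
      (((-1) ^ k / 2 ^ n * n.choose k : ℝ) : ℂ) *
        Complex.exp (((n - 2 * k) * x - n * π / 2 : ℝ) * Complex.I)
      = (-Complex.I) ^ n / 2 ^ n * ((-(Complex.exp (x * Complex.I))⁻¹) ^ k *
          Complex.exp (x * Complex.I) ^ (n - k) * n.choose k) := by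
    intro k hk
    have hkn : k ≤ n := Nat.lt_succ_iff.mp (mem_range.mp hk)
    have hexp : (((n - 2 * k) * x - n * π / 2 : ℝ) : ℂ) * Complex.I
        = ((n - k : ℕ) : ℂ) * (x * Complex.I) + (k : ℂ) * (-(x * Complex.I))
          + (n : ℂ) * (-π / 2 * Complex.I) := by
      push_cast [hkn]; ring
    rw [hexp, Complex.exp_add, Complex.exp_add, Complex.exp_nat_mul, Complex.exp_nat_mul,
      Complex.exp_nat_mul, Complex.exp_neg, Complex.exp_neg_pi_div_two_mul_I]
    push_cast
    rw [neg_pow Complex.I]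
    ring
  rw [sum_congr rfl hterm, ← mul_sum, ← add_pow, Complex.ofReal_pow, hsin, mul_pow, div_pow,
    mul_comm]

theorem sin_pow_eq_sum_cos (n : ℕ) (x : ℝ) :
    sin x ^ n = ∑ k ∈ range (n + 1),
      (-1) ^ k / 2 ^ n * n.choose k * cos ((n - 2 * k) * x - n * π / 2) := by
  have h := congrArg Complex.re (ofReal_sin_pow_eq_sum_exp n x)
  simpa only [Complex.ofReal_re, Complex.re_sum, Complex.re_ofReal_mul,
    Complex.exp_ofReal_mul_I_re] using h

noncomputable def sigmaTerm (n k : ℕ) (x : ℝ) : ℝ :=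
  (-1 : ℝ) ^ k / (2 ^ n * ((n : ℝ) - 2 * k)) * n.choose k *
    sin (((n : ℝ) - 2 * k) * x - n * π / 2)

theorem hasDerivAt_sigmaTerm {n k : ℕ} (hk : (n : ℝ) - 2 * k ≠ 0) (x : ℝ) :
    HasDerivAt (sigmaTerm n k)
      ((-1) ^ k / 2 ^ n * n.choose k * cos ((n - 2 * k) * x - n * π / 2)) x := by
  have hphase : HasDerivAt (fun x : ℝ => ((n : ℝ) - 2 * k) * x - n * π / 2) ((n : ℝ) - 2 * k) x :=
    ((hasDerivAt_id x).const_mul _).sub_const _ |>.congr_deriv (mul_one _)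
  refine (((hasDerivAt_sin _).comp x hphase).const_mul
    ((-1 : ℝ) ^ k / (2 ^ n * ((n : ℝ) - 2 * k)) * n.choose k)).congr_deriv ?_
  field_simp

theorem Sodd_eq_sum_sigmaTerm (n : ℕ) : Sodd n = fun x => ∑ k ∈ range (n + 1), sigmaTerm n k x := rfl

theorem Seven_eq_sum_sigmaTerm_add (n : ℕ) : Seven n = fun x =>
    ∑ k ∈ (range (n + 1)).erase (n / 2), sigmaTerm n k x + n.choose (n / 2) / 2 ^ n * x := by
  ext x; simp only [Seven, sigmaTerm]; ring

theorem hasDerivAt_Sodd {n : ℕ} (hn : Odd n) (x : ℝ) : HasDerivAt (Sodd n) (sin x ^ n) x := by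
  rw [Sodd_eq_sum_sigmaTerm, sin_pow_eq_sum_cos]
  refine HasDerivAt.fun_sum fun k _ => hasDerivAt_sigmaTerm (fun hk => ?_) x
  exact Nat.not_even_iff_odd.mpr hn ⟨k, by exact_mod_cast (by linarith : (n : ℝ) = k + k)⟩

theorem sin_pow_sum_cos_middle_term (m : ℕ) (x : ℝ) :
    (-1) ^ m / 2 ^ (2 * m) * (2 * m).choose m *
        cos ((((2 * m : ℕ) : ℝ) - 2 * m) * x - (2 * m : ℕ) * π / 2)
      = (2 * m).choose m / 2 ^ (2 * m) := by
  have hcos : cos ((((2 * m : ℕ) : ℝ) - 2 * m) * x - (2 * m : ℕ) * π / 2) = (-1) ^ m := by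
    rw [← cos_nat_mul_pi, ← cos_neg]; congr 1; push_cast; ring
  have hsq : ((-1 : ℝ) ^ m) * (-1) ^ m = 1 := by rw [← mul_pow]; norm_num
  rw [hcos]
  linear_combination ((2 * m).choose m / 2 ^ (2 * m) : ℝ) * hsq

theorem hasDerivAt_Seven {n : ℕ} (hn : Even n) (x : ℝ) : HasDerivAt (Seven n) (sin x ^ n) x := by
  obtain ⟨m, rfl⟩ := hn
  rw [← two_mul]
  have hmid : m ∈ range (2 * m + 1) := mem_range.mpr (by omega)
  have hsum := HasDerivAt.fun_sum (u := (range (2 * m + 1)).erase m)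
    fun k hk => hasDerivAt_sigmaTerm (n := 2 * m) (k := k) (fun h0 => (mem_erase.mp hk).1 <| by
      push_cast at h0; exact_mod_cast (by linarith : (k : ℝ) = m)) x
  rw [Seven_eq_sum_sigmaTerm_add, sin_pow_eq_sum_cos, ← add_sum_erase _ _ hmid,
      Nat.mul_div_cancel_left m two_pos, sin_pow_sum_cos_middle_term]
  exact (hsum.add ((hasDerivAt_id x).const_mul _ |>.congr_deriv (mul_one _))).congr_deriv
    (add_comm _ _)

theorem hasDerivAt_SigmaN (n : ℕ) (x : ℝ) : HasDerivAt (SigmaN n) (sin x ^ n) x := by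
  by_cases hn : Odd n
  · rw [show SigmaN n = Sodd n from funext fun y => if_pos hn]
    exact hasDerivAt_Sodd hn x
  · rw [show SigmaN n = Seven n from funext fun y => if_neg hn]
    exact hasDerivAt_Seven (Nat.not_odd_iff_even.mp hn) x

theorem hasDerivAt_rpow_mul_sin_pow {w : ℝ → ℝ} {w' r : ℝ} (p : ℝ) (m : ℕ) (hr : r ≠ 0)
    (hw : HasDerivAt w w' r) :
    HasDerivAt (fun r' => r' ^ p * sin (w r') ^ (m + 1))
      (r ^ (p - 1) * sin (w r) ^ m * (p * sin (w r) + (m + 1) * r * (cos (w r) * w'))) r := by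
  have hsin := hw.sin.fun_pow (m + 1)
  refine ((hasDerivAt_rpow_const (Or.inl hr)).mul hsin).congr_deriv ?_
  rw [rpow_sub_one hr]
  field_simp
  push_cast
  ring

theorem hasDerivAt_slice_fst {B : ℝ → ℝ → ℝ} {r t : ℝ}
    (h : DifferentiableAt ℝ (fun p : ℝ × ℝ => B p.1 p.2) (r, t)) :
    HasDerivAt (fun r' => B r' t) (deriv (fun r' => B r' t) r) r :=
  DifferentiableAt.hasDerivAt <| h.comp (f := fun r' => (r', t)) r <|
    differentiableAt_id.prodMk (differentiableAt_const t)

theorem hasDerivAt_slice_snd {B : ℝ → ℝ → ℝ} {r t : ℝ}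
    (h : DifferentiableAt ℝ (fun p : ℝ × ℝ => B p.1 p.2) (r, t)) :
    HasDerivAt (fun t' => B r t') (deriv (fun t' => B r t') t) t :=
  DifferentiableAt.hasDerivAt <| h.comp (f := fun t' => (r, t')) t <|
    (differentiableAt_const r).prodMk differentiableAt_id

theorem deriv_time_eq_of_pde {B : ℝ → ℝ → ℝ} {K r t W : ℝ} (hr : r ≠ 0)
    (hW : HasDerivAt (fun r' => B r' t / r' ^ 2) W r)
    (hPDE : deriv (fun t' => B r t') t +
      deriv (fun r' => r' ^ 3 / K * sin (B r' t / r' ^ 2) ^ 2) r = 0) :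
    deriv (fun t' => B r t') t = -(r ^ 2 * sin (B r t / r ^ 2) *
      (3 * sin (B r t / r ^ 2) + 2 * r * (cos (B r t / r ^ 2) * W))) / K := by
  have hflux := (hasDerivAt_rpow_mul_sin_pow 3 1 hr hW).div_const K
  have hfun : (fun r' => r' ^ (3 : ℝ) * sin (B r' t / r' ^ 2) ^ (1 + 1) / K) =
      fun r' => r' ^ 3 / K * sin (B r' t / r' ^ 2) ^ 2 := by
    ext r'; rw [rpow_ofNat]; ring
  rw [hfun] at hflux
  rw [hflux.deriv] at hPDE
  norm_num at hPDE
  linear_combination hPDE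

theorem infinite_class_conservation_laws_general
    (γ Δ : ℝ)
    (B : ℝ → ℝ → ℝ)
    (hB : ContDiffOn ℝ 1 (fun p : ℝ × ℝ => B p.1 p.2) {p : ℝ × ℝ | 0 < p.1})
    (hPDE : ∀ r t : ℝ, 0 < r →
      deriv (fun t' => B r t') t +
        deriv (fun r' => r' ^ 3 / (2 * γ * Real.sqrt Δ) *
          Real.sin (B r' t / r' ^ 2) ^ 2) r = 0) :
    ∀ n : ℕ, ∀ r t : ℝ, 0 < r →
      deriv (fun t' => r ^ ((2 : ℝ) + 3 * (n : ℝ) / 2) * SigmaN n (B r t' / r ^ 2)) t +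
        deriv (fun r' => r' ^ ((3 * ((n : ℝ) + 2)) / 2) *
          Real.sin (B r' t / r' ^ 2) ^ (n + 2) /
            (((n : ℝ) + 2) * γ * Real.sqrt Δ)) r = 0 := by
  intro n r t hr
  have hBdiff : DifferentiableAt ℝ (fun p : ℝ × ℝ => B p.1 p.2) (r, t) :=
    (hB.differentiableOn one_ne_zero).differentiableAt
      ((isOpen_lt continuous_const continuous_fst).mem_nhds hr)
  obtain ⟨W, hu⟩ : ∃ W, HasDerivAt (fun r' => B r' t / r' ^ 2) W r :=
    ⟨_, (hasDerivAt_slice_fst hBdiff).fun_div (hasDerivAt_pow 2 r) (pow_ne_zero 2 hr.ne')⟩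
  have hBt := deriv_time_eq_of_pde hr.ne' hu (by simpa only [mul_assoc] using hPDE r t hr)
  have hdensity : HasDerivAt (fun t' => r ^ ((2 : ℝ) + 3 * n / 2) * SigmaN n (B r t' / r ^ 2))
      (r ^ ((2 : ℝ) + 3 * n / 2) *
        (sin (B r t / r ^ 2) ^ n * (deriv (fun t' => B r t') t / r ^ 2))) t :=
    ((hasDerivAt_SigmaN n _).comp t ((hasDerivAt_slice_snd hBdiff).div_const _)).const_mul _
  have hflux := (hasDerivAt_rpow_mul_sin_pow (3 * ((n : ℝ) + 2) / 2) (n + 1) hr.ne' hu).div_const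
    (((n : ℝ) + 2) * γ * Real.sqrt Δ)
  rw [hdensity.deriv, hflux.deriv, hBt, show 3 * ((n : ℝ) + 2) / 2 - 1 = 2 + 3 * n / 2 by ring]
  field_simp
  push_cast
  ring

/-- Any smooth solution of the effective dust-collapse equation also satisfies,
for every `n`, the conservation law
`∂_t[r^{2+3n/2} Σ_n(B/r²)] + ∂_r[r^{3(n+2)/2} sin^{n+2}(B/r²)/((n+2)γ√Δ)] = 0`. -/
theorem infinite_class_conservation_laws
    (γ Δ : ℝ) (hγ : 0 < γ) (hΔ : 0 < Δ)
    (B : ℝ → ℝ → ℝ)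
    (hB : ContDiffOn ℝ 1 (fun p : ℝ × ℝ => B p.1 p.2) {p : ℝ × ℝ | 0 < p.1})
    (hPDE : ∀ r t : ℝ, 0 < r →
      deriv (fun t' => B r t') t +
        deriv (fun r' => r' ^ 3 / (2 * γ * Real.sqrt Δ) *
          Real.sin (B r' t / r' ^ 2) ^ 2) r = 0) :
    ∀ n : ℕ, ∀ r t : ℝ, 0 < r →
      deriv (fun t' => r ^ ((2 : ℝ) + 3 * (n : ℝ) / 2) * SigmaN n (B r t' / r ^ 2)) t +
        deriv (fun r' => r' ^ ((3 * ((n : ℝ) + 2)) / 2) *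
          Real.sin (B r' t / r' ^ 2) ^ (n + 2) /
            (((n : ℝ) + 2) * γ * Real.sqrt Δ)) r = 0 :=
  infinite_class_conservation_laws_general γ Δ B hB hPDE
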